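/- For a linear algebraic group $G$ over $\mathbb{Q}$ acting on an affine variety $X$ over $\mathbb{Q}$ and $x \in X(\mathbb{Q})$, the number $f_G(x)$ of $G(\mathbb{Z})$-equivalence classes in $\mathrm{genus}(x)$ equals the cardinality of $\{\bar{g} \in G_x(\mathbb{Q})\backslash G_x(\mathbb{A}_{\mathbb{Q}})/G_x(\mathbb{A}(\infty)) : \bar{g} \subseteq G(\mathbb{Q})G(\mathbb{A}(\infty))\}$. -/
import Mathlib

section GenusAux

variable {A : Type*} [Group A] {Y : Type*} [MulAction A Y] (Γ K : Subgroup A) (x : Y)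

/-- If `y = g⁻¹ • x = k • x`, `z = g'⁻¹ • x = k' • x` and `z = d • y` with `d ∈ Γ ⊓ K`,
then `g'k'` and `gk` are in the same double coset. -/
private theorem genus_lemA {y z : Y} {g g' k k' d : A} (hg : g ∈ Γ) (hg' : g' ∈ Γ)
    (hk : k ∈ K) (hk' : k' ∈ K) (hd : d ∈ Γ ⊓ K)
    (hy1 : y = g⁻¹ • x) (hy2 : y = k • x) (hz1 : z = g'⁻¹ • x) (hz2 : z = k' • x)
    (hdz : z = d • y) :
    ∃ a ∈ MulAction.stabilizer A x ⊓ Γ, ∃ b ∈ MulAction.stabilizer A x ⊓ K,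
      g' * k' = a * (g * k) * b := by
  obtain ⟨hd1, hd2⟩ := Subgroup.mem_inf.mp hd
  refine ⟨g' * d * g⁻¹, Subgroup.mem_inf.mpr ⟨?_, mul_mem (mul_mem hg' hd1) (inv_mem hg)⟩,
    k⁻¹ * d⁻¹ * k', Subgroup.mem_inf.mpr
      ⟨?_, mul_mem (mul_mem (inv_mem hk) (inv_mem hd2)) hk'⟩, by group⟩
  · show (g' * d * g⁻¹) • x = x
    rw [mul_smul, mul_smul, ← hy1, ← hdz, hz1, smul_inv_smul]
  · show (k⁻¹ * d⁻¹ * k') • x = x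
    rw [mul_smul, mul_smul, ← hz2, hdz, inv_smul_smul, hy2, inv_smul_smul]

/-- If `g = γk`, `h = γ'k'` and `h = a g b` then `γ'⁻¹ • x` and `γ⁻¹ • x` are
`Γ ⊓ K`-equivalent. -/
private theorem genus_lemB {g h γ γ' k k' a b : A} (hγ : γ ∈ Γ) (hγ' : γ' ∈ Γ)
    (hk : k ∈ K) (hk' : k' ∈ K)
    (ha : a ∈ MulAction.stabilizer A x ⊓ Γ) (hb : b ∈ MulAction.stabilizer A x ⊓ K)
    (hgd : g = γ * k) (hhd : h = γ' * k') (hab : h = a * g * b) :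
    ∃ d ∈ Γ ⊓ K, γ'⁻¹ • x = d • (γ⁻¹ • x) := by
  obtain ⟨ha1, ha2⟩ := Subgroup.mem_inf.mp ha
  obtain ⟨hb1, hb2⟩ := Subgroup.mem_inf.mp hb
  have hdK : γ'⁻¹ * a * γ = k' * b⁻¹ * k⁻¹ := by
    have haeq : a = h * b⁻¹ * g⁻¹ := by rw [hab]; group
    rw [haeq, hgd, hhd]; group
  refine ⟨γ'⁻¹ * a * γ, Subgroup.mem_inf.mpr
      ⟨mul_mem (mul_mem (inv_mem hγ') ha2) hγ,
       hdK ▸ mul_mem (mul_mem hk' (inv_mem hb2)) (inv_mem hk)⟩, ?_⟩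
  have hax : a • x = x := ha1
  rw [mul_smul, mul_smul, smul_inv_smul, hax]

private theorem genus_aux1 {y : Y} {g k : A} (h1 : y = g⁻¹ • x) (h2 : y = k • x) :
    (g * k) • x = x := by
  rw [mul_smul, ← h2, h1, smul_inv_smul]

private theorem genus_aux2 {g γ k : A} (hst : g • x = x) (hgk : g = γ * k) :
    γ⁻¹ • x = k • x := by
  rw [hgk, mul_smul] at hst
  rw [inv_smul_eq_iff]
  exact hst.symm

end GenusAux

/-- Abstract form of Theorem 3.3: let a group `A` (the adelic group) act on a set `Y`, with
subgroups `Γ` (rational points) and `K` (integral-adelic points), and let `x : Y`. The genus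
of `x` is the set of points equivalent to `x` both under `Γ` and under `K`; the set of orbits
of `Δ = Γ ⊓ K` (the integral points) on the genus is in bijection with the set of double
cosets `(H ⊓ Γ) \ {g ∈ H : g ∈ Γ·K} / (H ⊓ K)` where `H` is the stabilizer of `x`. -/
theorem genus_classes_equiv_double_cosets
    (A : Type*) [Group A] (Y : Type*) [MulAction A Y]
    (Γ K : Subgroup A) (x : Y) :
    Nonempty (
      Quot (fun y z : {y : Y // (∃ g ∈ Γ, y = g⁻¹ • x) ∧ ∃ k ∈ K, y = k • x} =>
          ∃ d ∈ Γ ⊓ K, (z : Y) = d • (y : Y)) ≃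
      Quot (fun g h : {g : A // g ∈ MulAction.stabilizer A x ∧
              ∃ γ ∈ Γ, ∃ k ∈ K, (g : A) = γ * k} =>
          ∃ a ∈ MulAction.stabilizer A x ⊓ Γ, ∃ b ∈ MulAction.stabilizer A x ⊓ K,
            (h : A) = a * (g : A) * b)) := by
  classical
  set GT := {y : Y // (∃ g ∈ Γ, y = g⁻¹ • x) ∧ ∃ k ∈ K, y = k • x} with hGT
  set DT := {g : A // g ∈ MulAction.stabilizer A x ∧
      ∃ γ ∈ Γ, ∃ k ∈ K, (g : A) = γ * k} with hDT
  set rG : GT → GT → Prop := fun y z => ∃ d ∈ Γ ⊓ K, (z : Y) = d • (y : Y) with hrG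
  set rD : DT → DT → Prop := fun g h =>
      ∃ a ∈ MulAction.stabilizer A x ⊓ Γ, ∃ b ∈ MulAction.stabilizer A x ⊓ K,
        (h : A) = a * (g : A) * b with hrD
  -- forward map on elements: `y = g⁻¹ • x = k • x ↦ g * k`
  have Fstab : ∀ y : GT, (y.2.1.choose * y.2.2.choose) • x = x := fun y =>
    genus_aux1 x y.2.1.choose_spec.2 y.2.2.choose_spec.2
  let F : GT → DT := fun y =>
    ⟨y.2.1.choose * y.2.2.choose, Fstab y,
      y.2.1.choose, y.2.1.choose_spec.1, y.2.2.choose, y.2.2.choose_spec.1, rfl⟩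
  have Fwd : ∀ y z : GT, rG y z → rD (F y) (F z) := by
    rintro y z ⟨d, hd, hdz⟩
    exact genus_lemA Γ K x y.2.1.choose_spec.1 z.2.1.choose_spec.1
      y.2.2.choose_spec.1 z.2.2.choose_spec.1 hd
      y.2.1.choose_spec.2 y.2.2.choose_spec.2 z.2.1.choose_spec.2 z.2.2.choose_spec.2 hdz
  -- backward map on elements: `g = γ * k ↦ γ⁻¹ • x`
  have hGk : ∀ g : DT, (g.2.2.choose)⁻¹ • x = (g.2.2.choose_spec.2.choose) • x := fun g =>
    genus_aux2 x g.2.1 g.2.2.choose_spec.2.choose_spec.2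
  have Gmem : ∀ g : DT, (∃ γ ∈ Γ, (g.2.2.choose)⁻¹ • x = γ⁻¹ • x) ∧
      ∃ k ∈ K, (g.2.2.choose)⁻¹ • x = k • x := fun g =>
    ⟨⟨g.2.2.choose, g.2.2.choose_spec.1, rfl⟩,
     ⟨g.2.2.choose_spec.2.choose, g.2.2.choose_spec.2.choose_spec.1, hGk g⟩⟩
  let Gm : DT → GT := fun g => ⟨(g.2.2.choose)⁻¹ • x, Gmem g⟩
  have Gwd : ∀ g h : DT, rD g h → rG (Gm g) (Gm h) := by
    rintro g h ⟨a, ha, b, hb, hab⟩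
    exact genus_lemB Γ K x g.2.2.choose_spec.1 h.2.2.choose_spec.1
      g.2.2.choose_spec.2.choose_spec.1 h.2.2.choose_spec.2.choose_spec.1 ha hb
      g.2.2.choose_spec.2.choose_spec.2 h.2.2.choose_spec.2.choose_spec.2 hab
  refine ⟨{
    toFun := Quot.lift (fun y => Quot.mk rD (F y)) (fun y z h => Quot.sound (Fwd y z h))
    invFun := Quot.lift (fun g => Quot.mk rG (Gm g)) (fun g h h' => Quot.sound (Gwd g h h'))
    left_inv := ?_
    right_inv := ?_ }⟩
  · refine Quot.ind (fun y => ?_)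
    show Quot.mk rG (Gm (F y)) = Quot.mk rG y
    obtain ⟨d, hd, hdy⟩ := genus_lemB Γ K x y.2.1.choose_spec.1
      (F y).2.2.choose_spec.1 y.2.2.choose_spec.1
      (F y).2.2.choose_spec.2.choose_spec.1
      (Subgroup.mem_inf.mpr ⟨one_mem _, one_mem _⟩)
      (Subgroup.mem_inf.mpr ⟨one_mem _, one_mem _⟩)
      (rfl : (F y : A) = y.2.1.choose * y.2.2.choose)
      (F y).2.2.choose_spec.2.choose_spec.2 (by group)
    refine (Quot.sound ?_).symm
    show ∃ d ∈ Γ ⊓ K, (Gm (F y) : Y) = d • (y : Y)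
    refine ⟨d, hd, ?_⟩
    show ((F y).2.2.choose)⁻¹ • x = d • (y : Y)
    rw [hdy, ← y.2.1.choose_spec.2]
  · refine Quot.ind (fun g => ?_)
    show Quot.mk rD (F (Gm g)) = Quot.mk rD g
    obtain ⟨a, ha, b, hb, hab⟩ := genus_lemA Γ K x (Gm g).2.1.choose_spec.1
      g.2.2.choose_spec.1 (Gm g).2.2.choose_spec.1 g.2.2.choose_spec.2.choose_spec.1
      (Subgroup.mem_inf.mpr ⟨one_mem _, one_mem _⟩)
      (Gm g).2.1.choose_spec.2 (Gm g).2.2.choose_spec.2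
      (rfl : (Gm g : Y) = (g.2.2.choose)⁻¹ • x) (hGk g) (one_smul _ _).symm
    refine Quot.sound ?_
    show ∃ a ∈ MulAction.stabilizer A x ⊓ Γ, ∃ b ∈ MulAction.stabilizer A x ⊓ K,
      (g : A) = a * (F (Gm g) : A) * b
    refine ⟨a, ha, b, hb, ?_⟩
    show (g : A) = a * ((Gm g).2.1.choose * (Gm g).2.2.choose) * b
    rw [← hab, ← g.2.2.choose_spec.2.choose_spec.2]
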